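/- arXiv:1204.5399 — 2 statements merged into one kernel-verified Lean document; each statement's English description precedes it below -/
import Mathlib

section
/- Let P be an n×n row-stochastic matrix and F an n×z row-stochastic matrix. Then δ(P·F) ≤ (1 − γ(P)) · δ(F), where δ(M) = (1/2) · max_{i,j} Σ_k |M_{i,k} − M_{j,k}| and γ(P) = min_{i,j} Σ_k min(P_{i,k}, P_{j,k}). In particular δ(P·F) ≤ δ(F). -/
/-!
For rows `i, j` of `P`, the vector `a = P i - P j` has zero sum, so its positive and negative
parts have the same mass `A = ∑ a⁺ = 1 - ∑ₖ min (P i k) (P j k) ≤ 1 - γ(P)`. Coupling them as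
the product plan `a⁺ ⊗ a⁻` gives `A · ∑ₖ aₖ xₖ = ∑ₖ ∑ₗ a⁺ₖ a⁻ₗ (xₖ - xₗ)`, which writes
`A · ((P F) i - (P F) j)` as a nonnegative combination of total weight `A²` of differences of rows
of `F`. The triangle inequality then bounds `∑ₛ |(P F) i s - (P F) j s|` by `A · 2δ(F)`.
-/

open Finset

/-- A real matrix is row-stochastic if all entries are nonnegative and every row sums to 1. -/
def RowStochastic {n m : ℕ} (M : Matrix (Fin n) (Fin m) ℝ) : Prop :=
  (∀ i j, 0 ≤ M i j) ∧ ∀ i, ∑ j, M i j = 1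

/-- δ(M) = (1/2) · max over pairs of rows i, j of Σ_k |M_{i,k} − M_{j,k}|. -/
noncomputable def delta {n m : ℕ} [NeZero n] (M : Matrix (Fin n) (Fin m) ℝ) : ℝ :=
  (1 / 2) *
    Finset.univ.sup' Finset.univ_nonempty
      (fun p : Fin n × Fin n => ∑ k, |M p.1 k - M p.2 k|)

/-- γ(M) = min over pairs of rows i, j of Σ_k min(M_{i,k}, M_{j,k}). -/
noncomputable def gamma {n m : ℕ} [NeZero n] (M : Matrix (Fin n) (Fin m) ℝ) : ℝ :=
  Finset.univ.inf' Finset.univ_nonempty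
    (fun p : Fin n × Fin n => ∑ k, min (M p.1 k) (M p.2 k))

section ZeroSum

variable {ι κ : Type*} [Fintype ι] [Fintype κ] {a : ι → ℝ}

theorem sum_negPart_eq_sum_posPart (ha : ∑ k, a k = 0) : ∑ k, (a k)⁻ = ∑ k, (a k)⁺ := by
  have h : ∑ k, ((a k)⁺ - (a k)⁻) = 0 := by simpa only [posPart_sub_negPart] using ha
  rw [sum_sub_distrib] at h
  linarith

theorem eq_zero_of_sum_posPart_eq_zero (ha : ∑ k, a k = 0) (hpos : ∑ k, (a k)⁺ = 0) (k : ι) :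
    a k = 0 := by
  have hle : ∀ k ∈ univ, a k ≤ 0 := fun k _ =>
    posPart_eq_zero.mp ((sum_eq_zero_iff_of_nonneg fun k _ => posPart_nonneg (a k)).mp hpos k
      (mem_univ k))
  exact (sum_eq_zero_iff_of_nonpos hle).mp ha k (mem_univ k)

theorem sum_posPart_mul_sum_mul (ha : ∑ k, a k = 0) (x : ι → ℝ) :
    (∑ k, (a k)⁺) * ∑ k, a k * x k = ∑ k, ∑ l, (a k)⁺ * (a l)⁻ * (x k - x l) := by
  have hsplit : ∀ k, ∑ l, (a k)⁺ * (a l)⁻ * (x k - x l)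
      = (a k)⁺ * x k * ∑ l, (a l)⁻ - (a k)⁺ * ∑ l, (a l)⁻ * x l := by
    intro k
    rw [mul_sum, mul_sum, ← sum_sub_distrib]
    exact sum_congr rfl fun l _ => by ring
  simp only [hsplit, sum_sub_distrib, ← sum_mul, sum_negPart_eq_sum_posPart ha]
  rw [mul_comm _ (∑ k, (a k)⁺), ← mul_sub, ← sum_sub_distrib]
  simp only [← sub_mul, posPart_sub_negPart]

theorem sum_abs_sum_mul_le (ha : ∑ k, a k = 0) (f : ι → κ → ℝ) {D : ℝ}
    (hD : ∀ k l, ∑ s, |f k s - f l s| ≤ D) :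
    ∑ s, |∑ k, a k * f k s| ≤ (∑ k, (a k)⁺) * D := by
  set A := ∑ k, (a k)⁺
  rcases (sum_nonneg fun k _ => posPart_nonneg (a k) : 0 ≤ A).eq_or_lt with hA | hA
  · simp [A, eq_zero_of_sum_posPart_eq_zero ha hA.symm]
  refine le_of_mul_le_mul_left ?_ hA
  calc A * ∑ s, |∑ k, a k * f k s|
      = ∑ s, |∑ k, ∑ l, (a k)⁺ * (a l)⁻ * (f k s - f l s)| := by
        rw [mul_sum]
        refine sum_congr rfl fun s _ => ?_
        rw [← sum_posPart_mul_sum_mul ha, abs_mul, abs_of_pos hA]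
    _ ≤ ∑ s, ∑ k, ∑ l, (a k)⁺ * (a l)⁻ * |f k s - f l s| := by
        gcongr with s
        refine (abs_sum_le_sum_abs _ _).trans (sum_le_sum fun k _ => ?_)
        refine (abs_sum_le_sum_abs _ _).trans_eq (sum_congr rfl fun l _ => ?_)
        rw [abs_mul, abs_of_nonneg (mul_nonneg (posPart_nonneg _) (negPart_nonneg _))]
    _ = ∑ k, ∑ l, (a k)⁺ * (a l)⁻ * ∑ s, |f k s - f l s| := by
        simp only [mul_sum]
        rw [sum_comm]
        exact sum_congr rfl fun k _ => sum_comm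
    _ ≤ ∑ k, ∑ l, (a k)⁺ * (a l)⁻ * D := by
        gcongr with k _ l
        exact hD k l
    _ = A * (A * D) := by
        simp only [← sum_mul, ← mul_sum, sum_negPart_eq_sum_posPart ha]
        ring

end ZeroSum

theorem sum_posPart_sub_eq_sub_sum_min {ι : Type*} [Fintype ι] (u v : ι → ℝ) :
    ∑ k, (u k - v k)⁺ = ∑ k, u k - ∑ k, min (u k) (v k) := by
  rw [← sum_sub_distrib]
  refine sum_congr rfl fun k _ => ?_
  have h : min (u k) (v k) = u k - (u k - v k)⁺ := inf_eq_sub_posPart_sub _ _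
  linarith

section DeltaGamma

variable {n m : ℕ} [NeZero n]

theorem sum_abs_sub_le_two_mul_delta (M : Matrix (Fin n) (Fin m) ℝ) (i j : Fin n) :
    ∑ k, |M i k - M j k| ≤ 2 * delta M := by
  rw [delta, ← mul_assoc, show (2 : ℝ) * (1 / 2) = 1 by norm_num, one_mul]
  exact le_sup' (fun p : Fin n × Fin n => ∑ k, |M p.1 k - M p.2 k|) (mem_univ (i, j))

theorem delta_nonneg (M : Matrix (Fin n) (Fin m) ℝ) : 0 ≤ delta M := by
  have h := sum_abs_sub_le_two_mul_delta M 0 0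
  simp only [sub_self, abs_zero, sum_const_zero] at h
  linarith

theorem delta_le_of_forall_le {M : Matrix (Fin n) (Fin m) ℝ} {c : ℝ}
    (h : ∀ i j, ∑ k, |M i k - M j k| ≤ 2 * c) : delta M ≤ c := by
  have : univ.sup' univ_nonempty (fun p : Fin n × Fin n => ∑ k, |M p.1 k - M p.2 k|) ≤ 2 * c :=
    sup'_le _ _ fun p _ => h p.1 p.2
  rw [delta]
  linarith

theorem gamma_le_sum_min (M : Matrix (Fin n) (Fin m) ℝ) (i j : Fin n) :
    gamma M ≤ ∑ k, min (M i k) (M j k) :=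
  inf'_le (fun p : Fin n × Fin n => ∑ k, min (M p.1 k) (M p.2 k)) (mem_univ (i, j))

theorem gamma_nonneg {M : Matrix (Fin n) (Fin m) ℝ} (hM : ∀ i j, 0 ≤ M i j) : 0 ≤ gamma M :=
  le_inf' _ _ fun p _ => sum_nonneg fun k _ => le_min (hM p.1 k) (hM p.2 k)

end DeltaGamma

theorem delta_mul_le_one_sub_gamma_mul_general {n z : ℕ} [NeZero n]
    (P : Matrix (Fin n) (Fin n) ℝ) (F : Matrix (Fin n) (Fin z) ℝ)
    (hP : RowStochastic P) :
    delta (P * F) ≤ (1 - gamma P) * delta F ∧ delta (P * F) ≤ delta F := by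
  obtain ⟨hP_nonneg, hP_sum⟩ := hP
  have hcontract : delta (P * F) ≤ (1 - gamma P) * delta F := by
    refine delta_le_of_forall_le fun i j => ?_
    have hrow : ∑ k, (P i k - P j k) = 0 := by rw [sum_sub_distrib, hP_sum, hP_sum, sub_self]
    calc ∑ s, |(P * F) i s - (P * F) j s| = ∑ s, |∑ k, (P i k - P j k) * F k s| := by
          simp only [Matrix.mul_apply, ← sum_sub_distrib, sub_mul]
      _ ≤ (∑ k, (P i k - P j k)⁺) * (2 * delta F) :=
          sum_abs_sum_mul_le hrow F (sum_abs_sub_le_two_mul_delta F)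
      _ ≤ 2 * ((1 - gamma P) * delta F) := by
          rw [sum_posPart_sub_eq_sub_sum_min, hP_sum]
          nlinarith [gamma_le_sum_min P i j, delta_nonneg F]
  exact ⟨hcontract, hcontract.trans
    (mul_le_of_le_one_left (delta_nonneg F) (sub_le_self _ (gamma_nonneg hP_nonneg)))⟩

theorem delta_mul_le_one_sub_gamma_mul {n z : ℕ} [NeZero n]
    (P : Matrix (Fin n) (Fin n) ℝ) (F : Matrix (Fin n) (Fin z) ℝ)
    (hP : RowStochastic P) (hF : RowStochastic F) :
    delta (P * F) ≤ (1 - gamma P) * delta F ∧ delta (P * F) ≤ delta F :=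
  delta_mul_le_one_sub_gamma_mul_general P F hP
end

section
/- Fix n ≥ 1 experts, z ≥ 2 outcomes, and ε > 0. Let f_1⁽⁰⁾, …, f_n⁽⁰⁾ ∈ ℝ^z be probability vectors, and for t ≥ 1 define p_{i,j}⁽ᵗ⁾ = (ε + D(f_i⁽ᵗ⁻¹⁾, f_j⁽ᵗ⁻¹⁾))⁻¹ / Σ_{k=1}^{n} (ε + D(f_i⁽ᵗ⁻¹⁾, f_k⁽ᵗ⁻¹⁾))⁻¹ and f_i⁽ᵗ⁾ = Σ_{j=1}^{n} p_{i,j}⁽ᵗ⁾ · f_j⁽ᵗ⁻¹⁾, where D(f, g) = sqrt( (Σ_{k=1}^{z} (f_k − g_k)²) / z ). Then for all experts i and j, the weight p_{i,j}⁽ᵗ⁾ converges to 1/n as t → ∞. -/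
open Finset

/-- A probability vector: nonnegative entries summing to 1. -/
def ProbVec {z : ℕ} (f : Fin z → ℝ) : Prop :=
  (∀ k, 0 ≤ f k) ∧ ∑ k, f k = 1

/-- Root-mean-square deviation between two opinions. -/
noncomputable def D {z : ℕ} (f g : Fin z → ℝ) : ℝ :=
  Real.sqrt ((∑ k, (f k - g k) ^ 2) / z)

/-- The weight that expert `i` assigns to expert `j`, given current opinions `F`:
`p_{i,j} = (ε + D(F i, F j))⁻¹ / Σ_m (ε + D(F i, F m))⁻¹`. -/
noncomputable def weight {n z : ℕ} (ε : ℝ) (F : Fin n → Fin z → ℝ) (i j : Fin n) : ℝ :=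
  (ε + D (F i) (F j))⁻¹ / ∑ m, (ε + D (F i) (F m))⁻¹

/-- The opinions after `t` rounds of the consensual updating process. -/
noncomputable def opinions {n z : ℕ} (ε : ℝ) (F0 : Fin n → Fin z → ℝ) :
    ℕ → Fin n → Fin z → ℝ
  | 0 => F0
  | t + 1 => fun i k => ∑ j, weight ε (opinions ε F0 t) i j * opinions ε F0 t j k

/-!
Opinions are averages of opinions, so all entries stay in `[0, 1]` and every distance `D` is at
most `1`. Hence every weight is at least `δ = ε / (n (ε + 1))`, and averaging with weights
bounded below by `δ` shrinks the spread `max_a f_a k - min_a f_a k` of every coordinate by the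
factor `1 - δ`. So the spread decays geometrically, all distances tend to `0`, and each weight
tends to `ε⁻¹ / (n ε⁻¹) = 1 / n`.
-/

open Filter Topology

lemma D_nonneg {z : ℕ} (f g : Fin z → ℝ) : 0 ≤ D f g := Real.sqrt_nonneg _

lemma D_le_of_abs_sub_le {z : ℕ} {f g : Fin z → ℝ} {c : ℝ} (hc : 0 ≤ c)
    (h : ∀ k, |f k - g k| ≤ c) : D f g ≤ c := by
  refine (Real.sqrt_le_left hc).2 (div_le_of_le_mul₀ (Nat.cast_nonneg z) (sq_nonneg c) ?_)
  calc ∑ k, (f k - g k) ^ 2 ≤ ∑ _k : Fin z, c ^ 2 :=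
        sum_le_sum fun k _ => sq_le_sq.2 ((h k).trans (le_abs_self c))
    _ = c ^ 2 * z := by simp [mul_comm]

lemma ProbVec.mem_Icc {z : ℕ} {f : Fin z → ℝ} (hf : ProbVec f) (k : Fin z) :
    f k ∈ Set.Icc 0 1 :=
  ⟨hf.1 k, hf.2 ▸ single_le_sum (fun j _ => hf.1 j) (mem_univ k)⟩

section Weight

variable {n z : ℕ} {ε : ℝ} (hε : 0 < ε) (F : Fin n → Fin z → ℝ)
include hε

lemma inv_add_D_pos (i j : Fin n) : 0 < (ε + D (F i) (F j))⁻¹ :=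
  inv_pos.2 (add_pos_of_pos_of_nonneg hε (D_nonneg _ _))

lemma weight_nonneg (i j : Fin n) : 0 ≤ weight ε F i j :=
  div_nonneg (inv_add_D_pos hε F i j).le
    (sum_nonneg fun m _ => (inv_add_D_pos hε F i m).le)

lemma sum_weight (i : Fin n) : ∑ j, weight ε F i j = 1 := by
  unfold weight
  rw [← sum_div, div_self]
  exact (sum_pos (fun m _ => inv_add_D_pos hε F i m) ⟨i, mem_univ i⟩).ne'

lemma div_le_weight {B : ℝ} {i : Fin n} (hB : ∀ j, D (F i) (F j) ≤ B) (j : Fin n) :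
    ε / (n * (ε + B)) ≤ weight ε F i j := by
  have hB0 : 0 ≤ B := (D_nonneg _ _).trans (hB j)
  have hnum : (ε + B)⁻¹ ≤ (ε + D (F i) (F j))⁻¹ :=
    inv_anti₀ (add_pos_of_pos_of_nonneg hε (D_nonneg _ _)) (by linarith [hB j])
  have hden : ∑ m, (ε + D (F i) (F m))⁻¹ ≤ n * ε⁻¹ := by
    calc ∑ m, (ε + D (F i) (F m))⁻¹ ≤ ∑ _m : Fin n, ε⁻¹ :=
          sum_le_sum fun m _ => inv_anti₀ hε (le_add_of_nonneg_right (D_nonneg _ _))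
      _ = n * ε⁻¹ := by simp
  have hn : (0 : ℝ) < n := Nat.cast_pos.2 j.pos
  calc ε / (n * (ε + B)) = (ε + B)⁻¹ / (n * ε⁻¹) := by field_simp
    _ ≤ weight ε F i j :=
      div_le_div₀ (inv_add_D_pos hε F i j).le hnum
        (sum_pos (fun m _ => inv_add_D_pos hε F i m) ⟨i, mem_univ i⟩) hden

end Weight

lemma tendsto_weight {n z : ℕ} {ε : ℝ} (hε : 0 < ε) {ι : Type*} {l : Filter ι}
    {F : ι → Fin n → Fin z → ℝ} {i : Fin n}
    (hD : ∀ j, Tendsto (fun t => D (F t i) (F t j)) l (𝓝 0)) (j : Fin n) :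
    Tendsto (fun t => weight ε (F t) i j) l (𝓝 (1 / n)) := by
  have hinv : ∀ m, Tendsto (fun t => (ε + D (F t i) (F t m))⁻¹) l (𝓝 ε⁻¹) := fun m => by
    simpa using (tendsto_const_nhds.add (hD m)).inv₀ (by simpa using hε.ne')
  have hn : (n : ℝ) ≠ 0 := Nat.cast_ne_zero.2 j.pos.ne'
  have hlim : Tendsto (fun t => weight ε (F t) i j) l (𝓝 (ε⁻¹ / ∑ _m : Fin n, ε⁻¹)) :=
    (hinv j).div (tendsto_finsetSum univ fun m _ => hinv m) (by simp [hn, hε.ne'])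
  rwa [sum_const, card_univ, Fintype.card_fin, nsmul_eq_mul,
    div_mul_cancel_right₀ (inv_ne_zero hε.ne'), ← one_div] at hlim

lemma sum_mul_sub_le_of_sub_le {ι : Type*} [Fintype ι] [DecidableEq ι] {p x : ι → ℝ} {c : ℝ}
    (hp : ∀ a, 0 ≤ p a) (hp1 : ∑ a, p a = 1) (b : ι) (hx : ∀ a, x a - x b ≤ c) :
    ∑ a, p a * x a - x b ≤ (1 - p b) * c :=
  calc ∑ a, p a * x a - x b = ∑ a ∈ univ.erase b, p a * (x a - x b) := by
        rw [sum_erase _ (by simp)]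
        simp only [mul_sub, sum_sub_distrib, ← sum_mul, hp1, one_mul]
    _ ≤ ∑ a ∈ univ.erase b, p a * c :=
        sum_le_sum fun a _ => mul_le_mul_of_nonneg_left (hx a) (hp a)
    _ = (1 - p b) * c := by rw [← sum_mul, sum_erase_eq_sub (mem_univ b), hp1]

lemma sum_mul_sub_sum_mul_le {ι : Type*} [Fintype ι] {p q x : ι → ℝ} {δ c : ℝ} (hδ : 0 ≤ δ)
    (hp : ∀ a, δ ≤ p a) (hp1 : ∑ a, p a = 1) (hq : ∀ a, 0 ≤ q a) (hq1 : ∑ a, q a = 1)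
    (hx : ∀ a b, x a - x b ≤ c) :
    ∑ a, p a * x a - ∑ a, q a * x a ≤ (1 - δ) * c := by
  classical
  have hpb : ∀ b, ∑ a, p a * x a - x b ≤ (1 - δ) * c := fun b =>
    calc ∑ a, p a * x a - x b ≤ (1 - p b) * c :=
          sum_mul_sub_le_of_sub_le (fun a => hδ.trans (hp a)) hp1 b (hx · b)
      _ ≤ (1 - δ) * c :=
          mul_le_mul_of_nonneg_right (by linarith [hp b]) (by simpa using hx b b)
  calc ∑ a, p a * x a - ∑ a, q a * x a = ∑ b, q b * (∑ a, p a * x a - x b) := by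
        simp only [mul_sub, sum_sub_distrib, ← sum_mul, hq1, one_mul]
    _ ≤ ∑ b, q b * ((1 - δ) * c) :=
        sum_le_sum fun b _ => mul_le_mul_of_nonneg_left (hpb b) (hq b)
    _ = (1 - δ) * c := by rw [← sum_mul, hq1, one_mul]

lemma opinions_succ_apply {n z : ℕ} (ε : ℝ) (F0 : Fin n → Fin z → ℝ) (t : ℕ) (i : Fin n)
    (k : Fin z) :
    opinions ε F0 (t + 1) i k = ∑ j, weight ε (opinions ε F0 t) i j * opinions ε F0 t j k :=
  rfl

section Opinions

variable {n z : ℕ} {ε : ℝ} (hε : 0 < ε) {F0 : Fin n → Fin z → ℝ}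
  (hF0 : ∀ i, ProbVec (F0 i))
include hε hF0

lemma opinions_mem_Icc (t : ℕ) (i : Fin n) (k : Fin z) : opinions ε F0 t i k ∈ Set.Icc 0 1 := by
  induction t generalizing i with
  | zero => exact (hF0 i).mem_Icc k
  | succ t ih =>
    simpa only [opinions_succ_apply, smul_eq_mul] using (convex_Icc (0 : ℝ) 1).sum_mem
      (fun j _ => weight_nonneg hε _ i j) (sum_weight hε _ i) (fun j _ => ih j)

lemma abs_opinions_sub_le_one (t : ℕ) (a b : Fin n) (k : Fin z) :
    |opinions ε F0 t a k - opinions ε F0 t b k| ≤ 1 :=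
  abs_sub_le_of_nonneg_of_le (opinions_mem_Icc hε hF0 t a k).1 (opinions_mem_Icc hε hF0 t a k).2
    (opinions_mem_Icc hε hF0 t b k).1 (opinions_mem_Icc hε hF0 t b k).2

lemma abs_opinions_sub_le (t : ℕ) (a b : Fin n) (k : Fin z) :
    |opinions ε F0 t a k - opinions ε F0 t b k| ≤ (1 - ε / (n * (ε + 1))) ^ t := by
  induction t generalizing a b with
  | zero => simpa using abs_opinions_sub_le_one hε hF0 0 a b k
  | succ t ih =>
    have hweight : ∀ c j, ε / (n * (ε + 1)) ≤ weight ε (opinions ε F0 t) c j := fun c =>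
      div_le_weight hε _ fun j => D_le_of_abs_sub_le zero_le_one
        (abs_opinions_sub_le_one hε hF0 t c j)
    have hx : ∀ a b, opinions ε F0 t a k - opinions ε F0 t b k ≤ (1 - ε / (n * (ε + 1))) ^ t :=
      fun a b => (le_abs_self _).trans (ih a b)
    have hδ0 : 0 ≤ ε / (n * (ε + 1)) := by positivity
    rw [opinions_succ_apply, opinions_succ_apply, pow_succ', abs_sub_le_iff]
    exact ⟨sum_mul_sub_sum_mul_le hδ0 (hweight a) (sum_weight hε _ a) (weight_nonneg hε _ b)
        (sum_weight hε _ b) hx,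
      sum_mul_sub_sum_mul_le hδ0 (hweight b) (sum_weight hε _ b) (weight_nonneg hε _ a)
        (sum_weight hε _ a) hx⟩

lemma tendsto_D_opinions (a b : Fin n) :
    Tendsto (fun t => D (opinions ε F0 t a) (opinions ε F0 t b)) atTop (𝓝 0) := by
  have hδ0 : 0 < ε / (n * (ε + 1)) := by have := a.pos; positivity
  have hδ1 : ε / (n * (ε + 1)) ≤ 1 := by
    rw [div_le_one (by have := a.pos; positivity)]
    nlinarith [show (1 : ℝ) ≤ n from Nat.one_le_cast.2 a.pos]
  refine squeeze_zero (fun t => D_nonneg _ _)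
    (fun t => D_le_of_abs_sub_le (by positivity) (abs_opinions_sub_le hε hF0 t a b))
    (tendsto_pow_atTop_nhds_zero_of_lt_one (by linarith) (by linarith))

end Opinions

theorem weights_tendsto_inv_n_general {n z : ℕ}
    {ε : ℝ} (hε : 0 < ε) (F0 : Fin n → Fin z → ℝ) (hF0 : ∀ i, ProbVec (F0 i)) :
    ∀ i j : Fin n,
      Filter.Tendsto (fun t => weight ε (opinions ε F0 (t - 1)) i j)
        Filter.atTop (nhds (1 / n)) := fun i j =>
  (tendsto_weight hε (tendsto_D_opinions hε hF0 i) j).comp (tendsto_sub_atTop_nat 1)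

theorem weights_tendsto_inv_n {n z : ℕ} (hn : 1 ≤ n) (hz : 2 ≤ z)
    {ε : ℝ} (hε : 0 < ε) (F0 : Fin n → Fin z → ℝ) (hF0 : ∀ i, ProbVec (F0 i)) :
    ∀ i j : Fin n,
      Filter.Tendsto (fun t => weight ε (opinions ε F0 (t - 1)) i j)
        Filter.atTop (nhds (1 / n)) :=
  weights_tendsto_inv_n_general hε F0 hF0
end
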